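/- arXiv:2411.16541 — 2 statements merged into one kernel-verified Lean document; each statement's English description precedes it below -/
import Mathlib

section
/- Let c > 0. There exists a constant M₂ > 0, depending only on c, such that the following holds: for every compact metric space (E, Δ), every δ > 0, every gauge function h : [0, δ] → ℝ₊ (continuous, nondecreasing, h(0) = 0, h(s) > 0 for s > 0) satisfying h(2r) ≤ c·h(r) for every r ∈ (0, δ/2], every finite Borel measure μ on E, every Borel subset A of E and every b > 0: if for every x ∈ A one has limsup_{r↓0} μ(B_r(x))/h(r) ≥ b, then m^h(A) ≤ M₂ b⁻¹ μ(A). -/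
/-!
Fix an open `U ⊇ A`. At every `x ∈ A` there are arbitrarily small radii `r` with
`μ (B_r(x)) ≥ (b/2) h(r)` and `B_r(x) ⊆ U`. The Vitali covering lemma extracts from these balls a
countable disjoint family whose four-fold enlargements cover `A`, so that
`∑ h(rᵢ) ≤ (2/b) μ U`. The enlarged balls have diameter at most `8 rᵢ`, and three applications of
the doubling condition give `h(8 rᵢ) ≤ c³ h(rᵢ)`; hence `m^h(A) ≤ 2 c³ b⁻¹ μ U`, and outer
regularity of `μ` lets `U` shrink to `A`.
-/

open MeasureTheory Filter Set Metric
open scoped ENNReal Topology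

theorem pow_mul_le_of_doubling {h : ℝ → ℝ} {c δ : ℝ} (hc : 0 ≤ c)
    (hdbl : ∀ r ∈ Ioc (0 : ℝ) (δ / 2), h (2 * r) ≤ c * h r) {r : ℝ} (hr : 0 < r) :
    ∀ k : ℕ, 2 ^ k * r ≤ δ → h (2 ^ k * r) ≤ c ^ k * h r
  | 0, _ => by simp
  | k + 1, hk => by
    have hkr : 2 ^ k * r ≤ δ / 2 := by rw [pow_succ] at hk; linarith
    have hkr₀ : 0 < 2 ^ k * r := by positivity
    calc h (2 ^ (k + 1) * r) = h (2 * (2 ^ k * r)) := by ring_nf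
      _ ≤ c * h (2 ^ k * r) := hdbl _ ⟨hkr₀, hkr⟩
      _ ≤ c * (c ^ k * h r) :=
        mul_le_mul_of_nonneg_left (pow_mul_le_of_doubling hc hdbl hr k (by linarith)) hc
      _ = c ^ (k + 1) * h r := by ring

theorem gauge_diam_closedBall_le {E : Type*} [PseudoMetricSpace E] {h : ℝ → ℝ} {c δ : ℝ}
    (hc : 0 ≤ c) (hmono : MonotoneOn h (Icc 0 δ))
    (hdbl : ∀ r ∈ Ioc (0 : ℝ) (δ / 2), h (2 * r) ≤ c * h r) (x : E) {ρ : ℝ} (hρ : 0 < ρ)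
    (hρδ : 8 * ρ ≤ δ) : h (diam (closedBall x (4 * ρ))) ≤ c ^ 3 * h ρ := by
  have hd : diam (closedBall x (4 * ρ)) ≤ 2 ^ 3 * ρ := by
    linarith [diam_closedBall (x := x) (by positivity : 0 ≤ 4 * ρ)]
  calc h (diam (closedBall x (4 * ρ))) ≤ h (2 ^ 3 * ρ) :=
        hmono ⟨diam_nonneg, by linarith⟩ ⟨by positivity, by linarith⟩ hd
    _ ≤ c ^ 3 * h ρ := pow_mul_le_of_doubling hc hdbl hρ 3 (by linarith)

theorem frequently_mul_le_of_lt_limsup_div {α : Type*} {l : Filter α} {f g : α → ℝ≥0∞}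
    {a : ℝ≥0∞} (ha : a < limsup (fun x => f x / g x) l) : ∃ᶠ x in l, a * g x ≤ f x :=
  (frequently_lt_of_lt_limsup (by isBoundedDefault) ha).mono
    fun _ hx => ENNReal.mul_le_of_le_div hx.le

theorem MeasureTheory.Measure.mkMetric_le_of_forall_cover {X : Type*} [EMetricSpace X]
    [MeasurableSpace X] [BorelSpace X] (m : ℝ≥0∞ → ℝ≥0∞) (s : Set X) (K : ℝ≥0∞)
    (h : ∀ ε : ℝ, 0 < ε → ∃ (ι : Type*) (_ : Countable ι) (t : ι → Set X),
      s ⊆ ⋃ i, t i ∧ (∀ i, ediam (t i) ≤ ENNReal.ofReal ε) ∧ ∑' i, m (ediam (t i)) ≤ K) :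
    Measure.mkMetric m s ≤ K := by
  choose ι hι t hst ht hK using fun n : ℕ => h (1 / (n + 1)) Nat.one_div_pos_of_nat
  have hr : Tendsto (fun n : ℕ => ENNReal.ofReal (1 / (n + 1))) atTop (𝓝 0) := by
    simpa using ENNReal.tendsto_ofReal tendsto_one_div_add_atTop_nhds_zero_nat
  exact (Measure.mkMetric_le_liminf_tsum s _ hr t (.of_forall ht) (.of_forall hst) m).trans
    (liminf_le_of_frequently_le (.of_forall hK))

theorem le_mul_measure_of_forall_isOpen {X : Type*} [TopologicalSpace X] [MeasurableSpace X]
    (μ : Measure X) [μ.OuterRegular] {ν K : ℝ≥0∞} (hK : K ≠ ∞) (A : Set X)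
    (h : ∀ U, A ⊆ U → IsOpen U → ν ≤ K * μ U) : ν ≤ K * μ A := by
  rcases eq_or_ne K 0 with rfl | hK₀
  · simpa using h univ (subset_univ A) isOpen_univ
  rw [mul_comm, ← ENNReal.div_le_iff hK₀ hK, A.measure_eq_iInf_isOpen]
  exact le_iInf₂ fun U hAU => le_iInf fun hU =>
    (ENNReal.div_le_iff hK₀ hK).2 (mul_comm K (μ U) ▸ h U hAU hU)

section DensityCovering

variable {E : Type*} [MetricSpace E] [TopologicalSpace.SeparableSpace E] [MeasurableSpace E]

theorem exists_countable_closedBall_cover_of_frequently_le [OpensMeasurableSpace E]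
    (μ : Measure E) {A U : Set E} (hU : IsOpen U) (hAU : A ⊆ U) (φ : ℝ → ℝ≥0∞) {a : ℝ≥0∞}
    (hA : ∀ x ∈ A, ∃ᶠ r in 𝓝[>] 0, a * φ r ≤ μ (closedBall x r)) {ε : ℝ} (hε : 0 < ε) :
    ∃ u : Set (E × ℝ), u.Countable ∧ (∀ p ∈ u, 0 < p.2 ∧ p.2 ≤ ε) ∧
      A ⊆ (⋃ p ∈ u, closedBall p.1 (4 * p.2)) ∧ a * ∑' p : u, φ p.1.2 ≤ μ U := by
  set T : Set (E × ℝ) := {p | p.1 ∈ A ∧ 0 < p.2 ∧ p.2 ≤ ε ∧ closedBall p.1 p.2 ⊆ U ∧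
    a * φ p.2 ≤ μ (closedBall p.1 p.2)}
  obtain ⟨u, huT, hdisj, hcov⟩ := Vitali.exists_disjoint_subfamily_covering_enlargement_closedBall
    T Prod.fst Prod.snd ε (fun p hp => hp.2.2.1) 4 (by norm_num)
  have hu : u.Countable := hdisj.countable_of_nonempty_interior fun p hp =>
    (nonempty_ball.2 (huT hp).2.1).mono ball_subset_interior_closedBall
  refine ⟨u, hu, fun p hp => ⟨(huT hp).2.1, (huT hp).2.2.1⟩, fun x hx => ?_, ?_⟩
  · obtain ⟨ρ, hρ, hρU⟩ := nhds_basis_closedBall.mem_iff.1 (hU.mem_nhds (hAU hx))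
    have hsmall : ∀ᶠ r in 𝓝[>] (0 : ℝ), r ∈ Ioc 0 (min ε ρ) := Ioc_mem_nhdsGT (lt_min hε hρ)
    obtain ⟨r, hr, hr₀, hrερ⟩ := ((hA x hx).and_eventually hsmall).exists
    have hxT : (x, r) ∈ T := ⟨hx, hr₀, hrερ.trans (min_le_left _ _),
      (closedBall_subset_closedBall (hrερ.trans (min_le_right _ _))).trans hρU, hr⟩
    obtain ⟨p, hpu, hsub⟩ := hcov _ hxT
    exact mem_biUnion hpu (hsub (mem_closedBall_self hr₀.le))
  · calc a * ∑' p : u, φ p.1.2 = ∑' p : u, a * φ p.1.2 := ENNReal.tsum_mul_left.symm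
      _ ≤ ∑' p : u, μ (closedBall p.1.1 p.1.2) :=
        ENNReal.tsum_le_tsum fun p => (huT p.2).2.2.2.2
      _ = μ (⋃ p ∈ u, closedBall p.1 p.2) :=
        (measure_biUnion hu hdisj fun _ _ => measurableSet_closedBall).symm
      _ ≤ μ U := measure_mono (iUnion₂_subset fun p hp => (huT hp).2.2.2.1)

theorem mkMetric_le_mul_measure_of_frequently_le [BorelSpace E] (μ : Measure E)
    [μ.OuterRegular] {h : ℝ → ℝ} {c δ : ℝ} (hc : 0 ≤ c) (hδ : 0 < δ)
    (hmono : MonotoneOn h (Icc 0 δ)) (hdbl : ∀ r ∈ Ioc (0 : ℝ) (δ / 2), h (2 * r) ≤ c * h r)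
    {A : Set E} {a : ℝ≥0∞} (ha₀ : a ≠ 0) (ha : a ≠ ∞)
    (hA : ∀ x ∈ A, ∃ᶠ r in 𝓝[>] 0, a * ENNReal.ofReal (h r) ≤ μ (closedBall x r)) :
    Measure.mkMetric (fun r : ℝ≥0∞ => ENNReal.ofReal (h r.toReal)) A ≤
      ENNReal.ofReal (c ^ 3) * a⁻¹ * μ A := by
  refine le_mul_measure_of_forall_isOpen μ
    (ENNReal.mul_ne_top ENNReal.ofReal_ne_top (ENNReal.inv_ne_top.2 ha₀)) A fun U hAU hU => ?_
  refine Measure.mkMetric_le_of_forall_cover _ _ _ fun ε hε => ?_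
  obtain ⟨u, hu, hmem, hcov, hsum⟩ := exists_countable_closedBall_cover_of_frequently_le μ hU hAU
    _ hA (lt_min (div_pos hε (by norm_num : (0 : ℝ) < 8)) (div_pos hδ (by norm_num : (0 : ℝ) < 8)))
  have hsum' : ∑' p : u, ENNReal.ofReal (h p.1.2) ≤ a⁻¹ * μ U := by
    rw [mul_comm, ← div_eq_mul_inv, ENNReal.le_div_iff_mul_le (Or.inl ha₀) (Or.inl ha),
      mul_comm]
    exact hsum
  refine ⟨u, hu.to_subtype, fun p => closedBall p.1.1 (4 * p.1.2), ?_, fun p => ?_, ?_⟩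
  · simpa only [iUnion_coe_set] using hcov
  · refine ediam_le_of_forall_dist_le fun y hy z hz => (dist_triangle_right y z p.1.1).trans ?_
    linarith [mem_closedBall.1 hy, mem_closedBall.1 hz, (hmem p p.2).2, min_le_left (ε / 8) (δ / 8)]
  · calc ∑' p : u, ENNReal.ofReal (h (ediam (closedBall p.1.1 (4 * p.1.2))).toReal)
        ≤ ∑' p : u, ENNReal.ofReal (c ^ 3) * ENNReal.ofReal (h p.1.2) :=
          ENNReal.tsum_le_tsum fun p => by
            obtain ⟨hρ, hρε⟩ := hmem p p.2
            rw [← ENNReal.ofReal_mul (by positivity)]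
            exact ENNReal.ofReal_le_ofReal (gauge_diam_closedBall_le hc hmono hdbl _ hρ
              (by linarith [min_le_right (ε / 8) (δ / 8)]))
      _ = ENNReal.ofReal (c ^ 3) * ∑' p : u, ENNReal.ofReal (h p.1.2) := ENNReal.tsum_mul_left
      _ ≤ ENNReal.ofReal (c ^ 3) * a⁻¹ * μ U := by rw [mul_assoc]; gcongr

end DensityCovering

/-- Let `c > 0`. There is a constant `M₂ > 0`, depending only on `c`, such that
for every compact metric space `E`, every `δ > 0`, every gauge function `h` on `[0, δ]`
(continuous, nondecreasing, `h 0 = 0`, `h s > 0` for `0 < s ≤ δ`) satisfying the doubling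
condition `h (2r) ≤ c * h r` for `r ∈ (0, δ/2]`, every finite Borel measure `μ` on `E`, every
Borel set `A ⊆ E` and every `b > 0`: if `limsup_{r ↓ 0} μ(B_r(x)) / h(r) ≥ b` for every `x ∈ A`,
then the Hausdorff measure of `A` with gauge `h` is at most `M₂ * b⁻¹ * μ A`. -/
theorem hausdorff_upper_bound (c : ℝ) (hc : 0 < c) :
    ∃ M₂ : ℝ, 0 < M₂ ∧
      ∀ (E : Type) [MetricSpace E] [CompactSpace E] [MeasurableSpace E] [BorelSpace E]
        (δ : ℝ), 0 < δ →
        ∀ h : ℝ → ℝ, ContinuousOn h (Set.Icc 0 δ) → MonotoneOn h (Set.Icc 0 δ) →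
          h 0 = 0 → (∀ s ∈ Set.Ioc (0:ℝ) δ, 0 < h s) →
          (∀ r ∈ Set.Ioc (0:ℝ) (δ / 2), h (2 * r) ≤ c * h r) →
          ∀ μ : Measure E, IsFiniteMeasure μ →
            ∀ A : Set E, MeasurableSet A → ∀ b : ℝ, 0 < b →
              (∀ x ∈ A,
                Filter.limsup
                  (fun r : ℝ => μ (Metric.closedBall x r) / ENNReal.ofReal (h r))
                  (nhdsWithin 0 (Set.Ioi 0)) ≥ ENNReal.ofReal b) →
              Measure.mkMetric (fun r : ℝ≥0∞ => ENNReal.ofReal (h r.toReal)) A ≤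
                ENNReal.ofReal M₂ * (ENNReal.ofReal b)⁻¹ * μ A := by
  refine ⟨2 * c ^ 3, by positivity, ?_⟩
  intro E _ _ _ _ δ hδ h _ hmono _ _ hdbl μ _ A _ b hb hlimsup
  have hfreq : ∀ x ∈ A, ∃ᶠ r in 𝓝[>] 0,
      ENNReal.ofReal (b / 2) * ENNReal.ofReal (h r) ≤ μ (closedBall x r) :=
    fun x hx => frequently_mul_le_of_lt_limsup_div <|
      ((ENNReal.ofReal_lt_ofReal_iff hb).2 (half_lt_self hb)).trans_le (hlimsup x hx)
  have hM₂ : ENNReal.ofReal (2 * c ^ 3) * (ENNReal.ofReal b)⁻¹ =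
      ENNReal.ofReal (c ^ 3) * (ENNReal.ofReal (b / 2))⁻¹ := by
    rw [ENNReal.ofReal_mul zero_le_two, ENNReal.ofReal_div_of_pos two_pos, ENNReal.ofReal_ofNat,
      ENNReal.inv_div (Or.inl ENNReal.ofNat_ne_top) (Or.inl two_ne_zero), div_eq_mul_inv]
    ring
  rw [hM₂]
  exact mkMetric_le_mul_measure_of_frequently_le μ hc.le hδ hmono hdbl
    (ENNReal.ofReal_pos.2 (half_pos hb)).ne' ENNReal.ofReal_ne_top hfreq
end

section
/- Let d : [0,1] × [0,1] → ℝ₊ be a continuous pseudometric on [0,1] (i.e. d is continuous, symmetric, satisfies the triangle inequality, and d(s,s) = 0 for all s). Suppose there exists an integer n₀ ≥ 1 such that for every n ≥ n₀ and every i ∈ {1, …, 2ⁿ} one has d((i−1)2^{-n}, i 2^{-n}) ≤ n 2^{-n/2}. Then there exists a constant C > 0 such that for all s, t ∈ [0,1] with s ≠ t: d(s,t) ≤ C (1 + log(1/|t − s|)) |t − s|^{1/2}. -/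
/-!
Chain each point `t` to its dyadic approximations `⌊2ⁿt⌋/2ⁿ`: consecutive approximations are
equal or are the endpoints of a dyadic interval of level `n + 1`, so summing the increment bounds
`(m + 1) 2^{-m/2}` over `m ≥ n` and passing to the limit by continuity gives
`d(⌊2ⁿt⌋/2ⁿ, t) = O((n + 1) 2^{-n/2})`. Two points at distance `h ≤ 2⁻ⁿ` have level-`n`
approximations that are equal or adjacent, so `d(s, t) = O((n + 1) 2^{-n/2})`; choosing
`2^{-n-1} < h ≤ 2^{-n}` turns this into `O((1 + log(1/h)) √h)`. Pairs at distance `h > 2^{-n₀}`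
are handled by the boundedness of `d` on the compact square.
-/

open Set Filter Topology

noncomputable def dyadicFloor (n : ℕ) (t : ℝ) : ℝ := ⌊t * 2 ^ n⌋₊ / 2 ^ n

section DyadicFloor

variable {n : ℕ} {t : ℝ}

lemma natCast_div_two_pow_mem_Icc {k : ℕ} (hk : k ≤ 2 ^ n) : (k : ℝ) / 2 ^ n ∈ Icc (0 : ℝ) 1 :=
  ⟨by positivity, (div_le_one (by positivity)).2 (by exact_mod_cast hk)⟩

lemma floor_mul_two_pow_le (ht : t ≤ 1) : ⌊t * 2 ^ n⌋₊ ≤ 2 ^ n :=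
  Nat.floor_le_of_le (by push_cast; exact mul_le_of_le_one_left (by positivity) ht)

lemma dyadicFloor_mem_Icc (ht : t ∈ Icc (0 : ℝ) 1) : dyadicFloor n t ∈ Icc (0 : ℝ) 1 :=
  natCast_div_two_pow_mem_Icc (floor_mul_two_pow_le ht.2)

lemma dyadicFloor_le (ht : 0 ≤ t) : dyadicFloor n t ≤ t := by
  rw [dyadicFloor, div_le_iff₀ (by positivity)]
  exact Nat.floor_le (by positivity)

lemma sub_inv_two_pow_lt_dyadicFloor : t - (2 ^ n)⁻¹ < dyadicFloor n t := by
  rw [dyadicFloor, lt_div_iff₀ (by positivity), sub_mul, inv_mul_cancel₀ (by positivity)]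
  linarith [Nat.lt_floor_add_one (t * 2 ^ n)]

lemma tendsto_dyadicFloor (ht : 0 ≤ t) : Tendsto (dyadicFloor · t) atTop (𝓝 t) := by
  have h : Tendsto (fun n : ℕ => t - ((2 : ℝ) ^ n)⁻¹) atTop (𝓝 (t - 0)) :=
    tendsto_const_nhds.sub
      (tendsto_inv_atTop_zero.comp (tendsto_pow_atTop_atTop_of_one_lt one_lt_two))
  rw [sub_zero] at h
  exact tendsto_of_tendsto_of_tendsto_of_le_of_le h tendsto_const_nhds
    (fun _ => sub_inv_two_pow_lt_dyadicFloor.le) (fun _ => dyadicFloor_le ht)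

lemma dyadicFloor_eq_two_mul_div_two :
    dyadicFloor n t = ((2 * (⌊t * 2 ^ (n + 1)⌋₊ / 2) : ℕ) : ℝ) / 2 ^ (n + 1) := by
  have hfloor : ⌊t * 2 ^ n⌋₊ = ⌊t * 2 ^ (n + 1)⌋₊ / 2 := by
    rw [← Nat.floor_div_ofNat, pow_succ, ← mul_assoc, mul_div_cancel_right₀ _ two_ne_zero]
  rw [dyadicFloor, hfloor]
  push_cast
  field_simp
  ring

end DyadicFloor

lemma two_rpow_neg_div_two (n : ℕ) : (2 : ℝ) ^ (-(n : ℝ) / 2) = (√2)⁻¹ ^ n := by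
  rw [Real.sqrt_eq_rpow, ← Real.rpow_neg_one, ← Real.rpow_natCast, ← Real.rpow_mul zero_le_two,
    ← Real.rpow_mul zero_le_two]
  ring_nf

lemma inv_sqrt_two_pow_le_sqrt {x : ℝ} {n : ℕ} (h : (2 ^ n)⁻¹ ≤ x) : (√2)⁻¹ ^ n ≤ √x := by
  rwa [Real.le_sqrt (by positivity) ((inv_nonneg.2 (by positivity)).trans h), ← pow_mul,
    mul_comm, pow_mul, inv_pow, Real.sq_sqrt zero_le_two, inv_pow]

lemma inv_sqrt_two_lt_one : (√2)⁻¹ < 1 := inv_lt_one_of_one_lt₀ Real.one_lt_sqrt_two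

lemma hasSum_succ_mul_geometric {r : ℝ} (hr : ‖r‖ < 1) :
    HasSum (fun k : ℕ => ((k : ℝ) + 1) * r ^ k) (1 / (1 - r) ^ 2) := by
  simpa using hasSum_choose_mul_geometric_of_norm_lt_one 1 hr

lemma sum_Ico_succ_mul_pow_le {r : ℝ} (hr0 : 0 ≤ r) (hr1 : r < 1) (n N : ℕ) :
    ∑ m ∈ Finset.Ico n N, ((m : ℝ) + 1) * r ^ m ≤ (n + 1) * r ^ n / (1 - r) ^ 2 := by
  have hsum := hasSum_succ_mul_geometric (r := r) (by rwa [Real.norm_of_nonneg hr0])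
  rw [Finset.sum_Ico_eq_sum_range]
  calc ∑ k ∈ Finset.range (N - n), ((↑(n + k) : ℝ) + 1) * r ^ (n + k)
      ≤ ∑ k ∈ Finset.range (N - n), ((n + 1) * r ^ n) * (((k : ℝ) + 1) * r ^ k) := by
        refine Finset.sum_le_sum fun k _ => ?_
        have hcoef : ((n + k : ℕ) : ℝ) + 1 ≤ (n + 1) * (k + 1) := by
          push_cast
          nlinarith [mul_nonneg n.cast_nonneg (α := ℝ) k.cast_nonneg]
        calc ((n + k : ℕ) + 1) * r ^ (n + k) ≤ (n + 1) * (k + 1) * r ^ (n + k) := by gcongr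
          _ = (n + 1) * r ^ n * ((k + 1) * r ^ k) := by rw [pow_add]; ring
    _ = (n + 1) * r ^ n * ∑ k ∈ Finset.range (N - n), ((k : ℝ) + 1) * r ^ k := by
        rw [Finset.mul_sum]
    _ ≤ (n + 1) * r ^ n * (1 / (1 - r) ^ 2) := by
        gcongr
        exact sum_le_hasSum _ (fun k _ => by positivity) hsum
    _ = (n + 1) * r ^ n / (1 - r) ^ 2 := by ring

lemma exists_two_pow_le_inv_lt {h : ℝ} (hh : 0 < h) {n₀ : ℕ} (hsmall : h ≤ (2 ^ n₀)⁻¹) :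
    ∃ n, n₀ ≤ n ∧ (2 : ℝ) ^ n ≤ h⁻¹ ∧ h⁻¹ < 2 ^ (n + 1) := by
  have h₀ : (2 : ℝ) ^ n₀ ≤ h⁻¹ := by rwa [le_inv_comm₀ (by positivity) hh]
  obtain ⟨n, hn, hn'⟩ := exists_nat_pow_near ((one_le_pow₀ one_le_two).trans h₀) one_lt_two
  exact ⟨n, Nat.lt_succ_iff.1 ((pow_lt_pow_iff_right₀ one_lt_two).1 (h₀.trans_lt hn')), hn, hn'⟩

lemma succ_mul_inv_sqrt_two_pow_le {h : ℝ} (hh : 0 < h) {n : ℕ} (hn : (2 : ℝ) ^ n ≤ h⁻¹)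
    (hn' : h⁻¹ < 2 ^ (n + 1)) :
    (n + 1) * (√2)⁻¹ ^ n ≤ 2 * √2 * ((1 + Real.log (1 / h)) * √h) := by
  have hlog : (n : ℝ) * Real.log 2 ≤ Real.log (1 / h) := by
    rw [← Real.log_pow, one_div]
    exact Real.log_le_log (by positivity) hn
  have hn_le : (n : ℝ) ≤ 2 * Real.log (1 / h) := by
    nlinarith [Real.log_two_gt_d9, (Nat.cast_nonneg n : (0 : ℝ) ≤ n)]
  have hpow : (√2)⁻¹ ^ n ≤ √(2 * h) := by
    refine inv_sqrt_two_pow_le_sqrt ?_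
    rw [inv_le_iff_one_le_mul₀ (by positivity)]
    rw [inv_lt_iff_one_lt_mul₀ hh, pow_succ] at hn'
    linarith
  calc (n + 1) * (√2)⁻¹ ^ n ≤ (2 * (1 + Real.log (1 / h))) * √(2 * h) :=
        mul_le_mul (by linarith) hpow (by positivity) (by linarith [n.cast_nonneg (α := ℝ)])
    _ = 2 * √2 * ((1 + Real.log (1 / h)) * √h) := by
        rw [Real.sqrt_mul zero_le_two]
        ring

lemma one_le_sqrt_two_pow_mul {h : ℝ} (hh1 : h ≤ 1) {n : ℕ} (hlarge : (2 ^ n)⁻¹ < h) :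
    1 ≤ √2 ^ n * ((1 + Real.log (1 / h)) * √h) := by
  have hh : 0 < h := (inv_pos.2 (by positivity)).trans hlarge
  have hlog : 0 ≤ Real.log (1 / h) := Real.log_nonneg (one_le_one_div hh hh1)
  calc (1 : ℝ) = √2 ^ n * (√2)⁻¹ ^ n := by
        rw [← mul_pow, mul_inv_cancel₀ (by positivity), one_pow]
    _ ≤ √2 ^ n * √h := by gcongr; exact inv_sqrt_two_pow_le_sqrt hlarge.le
    _ ≤ √2 ^ n * ((1 + Real.log (1 / h)) * √h) := by
        gcongr
        exact le_mul_of_one_le_left (by positivity) (by linarith)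

section Chaining

variable {d : ℝ → ℝ → ℝ} {n₀ : ℕ}
  (hcont : ContinuousOn (fun p : ℝ × ℝ => d p.1 p.2) (Icc 0 1 ×ˢ Icc 0 1))
  (hsymm : ∀ s ∈ Icc (0 : ℝ) 1, ∀ t ∈ Icc (0 : ℝ) 1, d s t = d t s)
  (hrefl : ∀ s ∈ Icc (0 : ℝ) 1, d s s = 0)
  (htriangle : ∀ s ∈ Icc (0 : ℝ) 1, ∀ t ∈ Icc (0 : ℝ) 1, ∀ u ∈ Icc (0 : ℝ) 1,
    d s u ≤ d s t + d t u)
  (hdyadic : ∀ n : ℕ, n₀ ≤ n → ∀ i : ℕ, 1 ≤ i → i ≤ 2 ^ n →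
    d (((i : ℝ) - 1) / 2 ^ n) ((i : ℝ) / 2 ^ n) ≤ (n : ℝ) * (2 : ℝ) ^ (-(n : ℝ) / 2))

include hrefl hdyadic in
lemma dist_dyadic_le_of_adjacent {n : ℕ} (hn : n₀ ≤ n) {j k : ℕ} (hjk : j ≤ k) (hkj : k ≤ j + 1)
    (hk : k ≤ 2 ^ n) : d (j / 2 ^ n) (k / 2 ^ n) ≤ n * (√2)⁻¹ ^ n := by
  obtain rfl | rfl : k = j ∨ k = j + 1 := by omega
  · rw [hrefl _ (natCast_div_two_pow_mem_Icc hk)]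
    positivity
  · simpa [two_rpow_neg_div_two] using hdyadic n hn (j + 1) (by omega) hk

include hrefl hdyadic in
lemma dist_dyadicFloor_succ_le {t : ℝ} (ht : t ∈ Icc (0 : ℝ) 1) {m : ℕ} (hm : n₀ ≤ m + 1) :
    d (dyadicFloor m t) (dyadicFloor (m + 1) t) ≤ (m + 1) * (√2)⁻¹ ^ m := by
  calc d (dyadicFloor m t) (dyadicFloor (m + 1) t)
      ≤ ((m + 1 : ℕ) : ℝ) * (√2)⁻¹ ^ (m + 1) := by
        rw [dyadicFloor_eq_two_mul_div_two]
        exact dist_dyadic_le_of_adjacent hrefl hdyadic hm (by omega) (by omega)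
          (floor_mul_two_pow_le ht.2)
    _ ≤ (m + 1) * (√2)⁻¹ ^ m := by
        push_cast
        exact mul_le_mul_of_nonneg_left
          (pow_le_pow_of_le_one (by positivity) inv_sqrt_two_lt_one.le m.le_succ) (by positivity)

include hrefl htriangle hdyadic in
lemma dist_dyadicFloor_le_sum {t : ℝ} (ht : t ∈ Icc (0 : ℝ) 1) {n N : ℕ} (hn : n₀ ≤ n)
    (hnN : n ≤ N) :
    d (dyadicFloor n t) (dyadicFloor N t) ≤ ∑ m ∈ Finset.Ico n N, ((m : ℝ) + 1) * (√2)⁻¹ ^ m := by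
  induction N, hnN using Nat.le_induction with
  | base => rw [Finset.Ico_self, Finset.sum_empty, hrefl _ (dyadicFloor_mem_Icc ht)]
  | succ N hnN ih =>
    rw [Finset.sum_Ico_succ_top hnN]
    exact (htriangle _ (dyadicFloor_mem_Icc ht) _ (dyadicFloor_mem_Icc ht) _
      (dyadicFloor_mem_Icc ht)).trans
      (add_le_add ih (dist_dyadicFloor_succ_le hrefl hdyadic ht (by omega)))

include hcont hrefl htriangle hdyadic in
lemma dist_dyadicFloor_self_le {t : ℝ} (ht : t ∈ Icc (0 : ℝ) 1) {n : ℕ} (hn : n₀ ≤ n) :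
    d (dyadicFloor n t) t ≤ (n + 1) * (√2)⁻¹ ^ n / (1 - (√2)⁻¹) ^ 2 := by
  have hcont_t : ContinuousWithinAt (d (dyadicFloor n t)) (Icc 0 1) t :=
    hcont.comp (continuousOn_const.prodMk continuousOn_id)
      (fun _ hy => ⟨dyadicFloor_mem_Icc ht, hy⟩) t ht
  have hlim : Tendsto (fun N => d (dyadicFloor n t) (dyadicFloor N t)) atTop
      (𝓝 (d (dyadicFloor n t) t)) :=
    hcont_t.tendsto.comp (tendsto_nhdsWithin_iff.2
      ⟨tendsto_dyadicFloor ht.1, .of_forall fun _ => dyadicFloor_mem_Icc ht⟩)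
  refine le_of_tendsto hlim ?_
  filter_upwards [eventually_ge_atTop n] with N hN
  exact (dist_dyadicFloor_le_sum hrefl htriangle hdyadic ht hn hN).trans
    (sum_Ico_succ_mul_pow_le (by positivity) inv_sqrt_two_lt_one n N)

include hcont hsymm hrefl htriangle hdyadic in
lemma dist_le_of_sub_le_inv_two_pow {s t : ℝ} (hs : s ∈ Icc (0 : ℝ) 1) (ht : t ∈ Icc (0 : ℝ) 1)
    (hst : s ≤ t) {n : ℕ} (hn : n₀ ≤ n) (hclose : t - s ≤ (2 ^ n)⁻¹) :
    d s t ≤ (2 / (1 - (√2)⁻¹) ^ 2 + 1) * ((n + 1) * (√2)⁻¹ ^ n) := by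
  have hfloor_le : ⌊s * 2 ^ n⌋₊ ≤ ⌊t * 2 ^ n⌋₊ := Nat.floor_le_floor (by gcongr)
  have hfloor_le_succ : ⌊t * 2 ^ n⌋₊ ≤ ⌊s * 2 ^ n⌋₊ + 1 := by
    rw [← Nat.floor_add_one (mul_nonneg hs.1 (by positivity))]
    refine Nat.floor_le_floor ?_
    have := mul_le_mul_of_nonneg_right hclose (by positivity : (0 : ℝ) ≤ 2 ^ n)
    rw [inv_mul_cancel₀ (by positivity)] at this
    linarith
  have hmid : d (dyadicFloor n s) (dyadicFloor n t) ≤ n * (√2)⁻¹ ^ n :=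
    dist_dyadic_le_of_adjacent hrefl hdyadic hn hfloor_le hfloor_le_succ
      (floor_mul_two_pow_le ht.2)
  have hs_tail := dist_dyadicFloor_self_le hcont hrefl htriangle hdyadic hs hn
  have ht_tail := dist_dyadicFloor_self_le hcont hrefl htriangle hdyadic ht hn
  rw [hsymm _ (dyadicFloor_mem_Icc hs) _ hs] at hs_tail
  have hs' := dyadicFloor_mem_Icc (n := n) hs
  have ht' := dyadicFloor_mem_Icc (n := n) ht
  calc d s t ≤ d s (dyadicFloor n s) + d (dyadicFloor n s) t := htriangle _ hs _ hs' _ ht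
    _ ≤ d s (dyadicFloor n s) + (d (dyadicFloor n s) (dyadicFloor n t)
        + d (dyadicFloor n t) t) := by gcongr; exact htriangle _ hs' _ ht' _ ht
    _ ≤ (n + 1) * (√2)⁻¹ ^ n / (1 - (√2)⁻¹) ^ 2
        + ((n + 1) * (√2)⁻¹ ^ n + (n + 1) * (√2)⁻¹ ^ n / (1 - (√2)⁻¹) ^ 2) :=
        add_le_add hs_tail (add_le_add (hmid.trans (by gcongr; linarith)) ht_tail)
    _ = _ := by ring

include hcont hsymm hrefl htriangle hdyadic in
lemma exists_modulus_of_lt :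
    ∃ C : ℝ, 0 < C ∧ ∀ ⦃s⦄, s ∈ Icc (0 : ℝ) 1 → ∀ ⦃t⦄, t ∈ Icc (0 : ℝ) 1 → s < t →
      d s t ≤ C * ((1 + Real.log (1 / (t - s))) * √(t - s)) := by
  obtain ⟨M, hM⟩ := (isCompact_Icc.prod isCompact_Icc).exists_bound_of_continuousOn hcont
  have hM0 : 0 ≤ M := by simpa [hrefl 0 (by simp)] using hM (0, 0) (by simp)
  set K : ℝ := 2 / (1 - (√2)⁻¹) ^ 2 + 1
  have hMn₀ : 0 ≤ M * √2 ^ n₀ := mul_nonneg hM0 (by positivity)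
  refine ⟨2 * √2 * K + M * √2 ^ n₀, by positivity, fun s hs t ht hst => ?_⟩
  have hh : 0 < t - s := sub_pos.2 hst
  have hh1 : t - s ≤ 1 := by linarith [hs.1, ht.2]
  have hmod : 0 ≤ (1 + Real.log (1 / (t - s))) * √(t - s) :=
    mul_nonneg (by linarith [Real.log_nonneg (one_le_one_div hh hh1)]) (Real.sqrt_nonneg _)
  by_cases hsmall : t - s ≤ (2 ^ n₀)⁻¹
  · obtain ⟨n, hn, hn_le, hn_lt⟩ := exists_two_pow_le_inv_lt hh hsmall
    calc d s t ≤ K * ((n + 1) * (√2)⁻¹ ^ n) :=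
          dist_le_of_sub_le_inv_two_pow hcont hsymm hrefl htriangle hdyadic hs ht hst.le hn
            ((le_inv_comm₀ (by positivity) hh).1 hn_le)
      _ ≤ K * (2 * √2 * ((1 + Real.log (1 / (t - s))) * √(t - s))) :=
          mul_le_mul_of_nonneg_left (succ_mul_inv_sqrt_two_pow_le hh hn_le hn_lt) (by positivity)
      _ = 2 * √2 * K * ((1 + Real.log (1 / (t - s))) * √(t - s)) := by ring
      _ ≤ _ := mul_le_mul_of_nonneg_right (le_add_of_nonneg_right hMn₀) hmod
  · calc d s t ≤ M := (le_abs_self _).trans (hM (s, t) ⟨hs, ht⟩)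
      _ ≤ M * (√2 ^ n₀ * ((1 + Real.log (1 / (t - s))) * √(t - s))) :=
          le_mul_of_one_le_right hM0 (one_le_sqrt_two_pow_mul hh1 (not_le.1 hsmall))
      _ = M * √2 ^ n₀ * ((1 + Real.log (1 / (t - s))) * √(t - s)) := by ring
      _ ≤ _ := mul_le_mul_of_nonneg_right (le_add_of_nonneg_left (by positivity)) hmod

end Chaining

theorem chaining_modulus_general (d : ℝ → ℝ → ℝ)
    (hcont : ContinuousOn (fun p : ℝ × ℝ => d p.1 p.2) (Set.Icc 0 1 ×ˢ Set.Icc 0 1))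
    (hsymm : ∀ s ∈ Set.Icc (0:ℝ) 1, ∀ t ∈ Set.Icc (0:ℝ) 1, d s t = d t s)
    (hrefl : ∀ s ∈ Set.Icc (0:ℝ) 1, d s s = 0)
    (htriangle : ∀ s ∈ Set.Icc (0:ℝ) 1, ∀ t ∈ Set.Icc (0:ℝ) 1, ∀ u ∈ Set.Icc (0:ℝ) 1,
      d s u ≤ d s t + d t u)
    (n₀ : ℕ)
    (hdyadic : ∀ n : ℕ, n₀ ≤ n → ∀ i : ℕ, 1 ≤ i → i ≤ 2 ^ n →
      d (((i : ℝ) - 1) / 2 ^ n) ((i : ℝ) / 2 ^ n) ≤ (n : ℝ) * (2:ℝ) ^ (-(n:ℝ) / 2)) :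
    ∃ C : ℝ, 0 < C ∧ ∀ s ∈ Set.Icc (0:ℝ) 1, ∀ t ∈ Set.Icc (0:ℝ) 1, s ≠ t →
      d s t ≤ C * (1 + Real.log (1 / |t - s|)) * Real.sqrt |t - s| := by
  obtain ⟨C, hC, hlt⟩ := exists_modulus_of_lt hcont hsymm hrefl htriangle hdyadic
  refine ⟨C, hC, fun s hs t ht hne => ?_⟩
  rw [mul_assoc]
  rcases hne.lt_or_gt with hst | hts
  · rw [abs_of_pos (sub_pos.2 hst)]
    exact hlt hs ht hst
  · rw [abs_sub_comm, abs_of_pos (sub_pos.2 hts), hsymm s hs t ht]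
    exact hlt ht hs hts

/-- Let `d` be a continuous pseudometric on `[0,1]`. If there is an integer
`n₀ ≥ 1` such that for every `n ≥ n₀` and every `i ∈ {1, …, 2ⁿ}` one has
`d((i-1) 2^{-n}, i 2^{-n}) ≤ n 2^{-n/2}`, then there is a constant `C > 0` such that for all
`s ≠ t` in `[0,1]`, `d(s,t) ≤ C (1 + log(1/|t - s|)) |t - s|^{1/2}`. -/
theorem chaining_modulus (d : ℝ → ℝ → ℝ)
    (hcont : ContinuousOn (fun p : ℝ × ℝ => d p.1 p.2) (Set.Icc 0 1 ×ˢ Set.Icc 0 1))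
    (hnonneg : ∀ s ∈ Set.Icc (0:ℝ) 1, ∀ t ∈ Set.Icc (0:ℝ) 1, 0 ≤ d s t)
    (hsymm : ∀ s ∈ Set.Icc (0:ℝ) 1, ∀ t ∈ Set.Icc (0:ℝ) 1, d s t = d t s)
    (hrefl : ∀ s ∈ Set.Icc (0:ℝ) 1, d s s = 0)
    (htriangle : ∀ s ∈ Set.Icc (0:ℝ) 1, ∀ t ∈ Set.Icc (0:ℝ) 1, ∀ u ∈ Set.Icc (0:ℝ) 1,
      d s u ≤ d s t + d t u)
    (n₀ : ℕ) (hn₀ : 1 ≤ n₀)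
    (hdyadic : ∀ n : ℕ, n₀ ≤ n → ∀ i : ℕ, 1 ≤ i → i ≤ 2 ^ n →
      d (((i : ℝ) - 1) / 2 ^ n) ((i : ℝ) / 2 ^ n) ≤ (n : ℝ) * (2:ℝ) ^ (-(n:ℝ) / 2)) :
    ∃ C : ℝ, 0 < C ∧ ∀ s ∈ Set.Icc (0:ℝ) 1, ∀ t ∈ Set.Icc (0:ℝ) 1, s ≠ t →
      d s t ≤ C * (1 + Real.log (1 / |t - s|)) * Real.sqrt |t - s| :=
  chaining_modulus_general d hcont hsymm hrefl htriangle n₀ hdyadic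
end
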